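/- Let θ, x, z solve x' = cos θ, z' = sin θ, z > 0, with (1 + b cos θ)·z·θ' + 2 cos θ − b sin²θ = 0, θ(0) = 0, z(0) = z₀, and b < −1. Then θ is strictly increasing, −π/2 < θ(s) < π/2, z is increasing for s > 0, the maximal positive existence time s̄ is finite, and θ'(s) → +∞ as s → s̄ with 1 + b cos θ(s) → 0; consequently the surface cannot be extended to a complete surface. -/

import Mathlib

/-!
Write `W = 1 + b cos θ`. The relation rules out `W = 0` (it would force `b² = -1`), so `W` keeps
the sign of `W(0) = 1 + b < 0`. Hence `cos θ > 0`, `|θ| < π/2`, and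
`b W z θ' = b² sin² θ - 2 b cos θ > 2`, so `θ' > 0`. As `z ≤ z(0) + s` and `b W ≤ b (1 + b)`,
this gives `θ' ≥ c / (z(0) + s)` with `c = 2 / (b (1 + b)) > 0`: `θ` grows at least like
`c log s`, and `θ < π/2` bounds the existence interval. At its end `sbar` the monotone bounded
`θ, x, z` have limits. If `W` did not vanish there, the system would be a regular ODE near the
limit state and the solution would continue past `sbar`, against maximality. So `W → 0`, and
`θ' > 2 / (b W z)` blows up.
-/

open Real Set Filter Topology

section RealAnalysis

theorem IsPreconnected.neg_of_ne_zero {α : Type*} [TopologicalSpace α] {S : Set α} {f : α → ℝ}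
    (hS : IsPreconnected S) (hf : ContinuousOn f S) {a : α} (ha : a ∈ S) (hfa : f a < 0)
    (hne : ∀ t ∈ S, f t ≠ 0) : ∀ t ∈ S, f t < 0 := by
  intro t ht
  by_contra! hft
  obtain ⟨u, hu, hu0⟩ := hS.intermediate_value ha ht hf ⟨hfa.le, hft⟩
  exact hne u hu hu0

variable {D : Set ℝ} {f f' : ℝ → ℝ}

theorem strictMonoOn_of_forall_hasDerivAt_pos (hD : Convex ℝ D)
    (hf : ∀ t ∈ D, HasDerivAt f (f' t) t) (hf' : ∀ t ∈ D, 0 < f' t) : StrictMonoOn f D :=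
  strictMonoOn_of_hasDerivWithinAt_pos hD (HasDerivAt.continuousOn hf)
    (fun t ht => (hf t (interior_subset ht)).hasDerivWithinAt)
    fun t ht => hf' t (interior_subset ht)

theorem monotoneOn_of_forall_hasDerivAt_nonneg (hD : Convex ℝ D)
    (hf : ∀ t ∈ D, HasDerivAt f (f' t) t) (hf' : ∀ t ∈ D, 0 ≤ f' t) : MonotoneOn f D :=
  monotoneOn_of_hasDerivWithinAt_nonneg hD (HasDerivAt.continuousOn hf)
    (fun t ht => (hf t (interior_subset ht)).hasDerivWithinAt)
    fun t ht => hf' t (interior_subset ht)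

theorem le_add_sub_of_forall_hasDerivAt_le_one (hD : Convex ℝ D)
    (hf : ∀ t ∈ D, HasDerivAt f (f' t) t) (hf' : ∀ t ∈ D, f' t ≤ 1) {s t : ℝ} (hs : s ∈ D)
    (ht : t ∈ D) (hst : s ≤ t) : f t ≤ f s + (t - s) := by
  have := hD.image_sub_le_mul_sub_of_deriv_le (HasDerivAt.continuousOn hf)
    (fun u hu => (hf u (interior_subset hu)).differentiableAt.differentiableWithinAt)
    (fun u hu => (hf u (interior_subset hu)).deriv ▸ hf' u (interior_subset hu)) s hs t ht hst
  linarith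

theorem mul_log_sub_le_sub_of_div_le_hasDerivAt (hD : Convex ℝ D) {c w : ℝ}
    (hw : ∀ t ∈ D, 0 < w + t) (hf : ∀ t ∈ D, HasDerivAt f (f' t) t)
    (hf' : ∀ t ∈ D, c / (w + t) ≤ f' t) {s t : ℝ} (hs : s ∈ D) (ht : t ∈ D) (hst : s ≤ t) :
    c * (log (w + t) - log (w + s)) ≤ f t - f s := by
  have hg : ∀ u ∈ D, HasDerivAt (fun u => f u - c * log (w + u)) (f' u - c * (1 / (w + u))) u :=
    fun u hu => (hf u hu).sub <|
      HasDerivAt.const_mul c (((hasDerivAt_id u).const_add w).log (hw u hu).ne')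
  have := monotoneOn_of_forall_hasDerivAt_nonneg hD hg
    (fun u hu => by rw [mul_one_div]; linarith [hf' u hu]) hs ht hst
  linarith

theorem exists_isLUB_of_isOpen {I : Set ℝ} (hI : I.OrdConnected) (hIopen : IsOpen I) {a : ℝ}
    (ha : a ∈ I) (hbdd : BddAbove I) : ∃ s, a < s ∧ IsLUB I s ∧ s ∉ I ∧ Ico a s ⊆ I := by
  have hlub : IsLUB I (sSup I) := isLUB_csSup ⟨a, ha⟩ hbdd
  have hnot : sSup I ∉ I := fun hs => by
    obtain ⟨t, htI, hst⟩ := Filter.nonempty_of_mem <|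
      inter_mem (nhdsWithin_le_nhds (hIopen.mem_nhds hs)) (self_mem_nhdsWithin (s := Ioi (sSup I)))
    exact (hlub.1 htI).not_gt hst
  refine ⟨sSup I, (hlub.1 ha).lt_of_ne (ne_of_mem_of_not_mem ha hnot), hlub, hnot, fun t ht => ?_⟩
  obtain ⟨u, hu, htu, -⟩ := hlub.exists_between ht.2
  exact hI.out ha hu ⟨ht.1, htu.le⟩

end RealAnalysis

section ODE

variable {E : Type*} [NormedAddCommGroup E] [NormedSpace ℝ E]

theorem hasDerivWithinAt_Iic_update_of_tendsto {v : E → E} {y : ℝ → E} {p : E} {a s : ℝ}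
    (hv : ContinuousAt v p) (has : a < s) (hy : ∀ t ∈ Ioo a s, HasDerivAt y (v (y t)) t)
    (hlim : Tendsto y (𝓝[<] s) (𝓝 p)) :
    HasDerivWithinAt (Function.update y s p) (v p) (Iic s) s := by
  have heq : ∀ t ∈ Ioo a s, Function.update y s p =ᶠ[𝓝 t] y := fun t ht =>
    (eventually_ne_nhds ht.2.ne).mono fun u hu => Function.update_of_ne hu _ _
  refine hasDerivWithinAt_Iic_of_tendsto_deriv (s := Ioo a s)
    (fun t ht =>
      ((hy t ht).congr_of_eventuallyEq (heq t ht)).differentiableAt.differentiableWithinAt)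
    ?_ (Ioo_mem_nhdsLT has) ?_
  · rw [continuousWithinAt_update_same]
    exact hlim.mono_left (nhdsWithin_mono _ fun t ht => ht.1.2)
  · refine ((hv.tendsto.comp hlim).congr' ?_)
    filter_upwards [Ioo_mem_nhdsLT has] with t ht
    exact (((hy t ht).congr_of_eventuallyEq (heq t ht)).deriv).symm

theorem exists_eqOn_hasDerivAt_of_tendsto [CompleteSpace E] {v : E → E} {y : ℝ → E} {p : E}
    {U : Set E} {a s : ℝ} (hv : ContDiffAt ℝ 1 v p) (hU : U ∈ 𝓝 p) (has : a < s)
    (hy : ∀ t ∈ Ioo a s, HasDerivAt y (v (y t)) t) (hlim : Tendsto y (𝓝[<] s) (𝓝 p)) :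
    ∃ a' ∈ Ico a s, ∃ ε > 0, ∃ f : ℝ → E, EqOn f y (Ioo a' s) ∧
      ∀ t ∈ Ioo a' (s + ε), HasDerivAt f (v (f t)) t ∧ f t ∈ U := by
  obtain ⟨f, hfs, ε, hε, hf⟩ :=
    hv.exists_forall_mem_closedBall_exists_eq_forall_mem_Ioo_hasDerivAt₀ s
  obtain ⟨K, N, hN, hK⟩ := hv.exists_lipschitzOnWith
  obtain ⟨l, u, hlu, hf_good⟩ := mem_nhds_iff_exists_Ioo_subset.1 <|
    inter_mem ((hf s ⟨by linarith, by linarith⟩).continuousAt.preimage_mem_nhds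
      (by rw [hfs]; exact inter_mem hN hU))
      (Ioo_mem_nhds (show s - ε < s by linarith) (show s < s + ε by linarith))
  obtain ⟨l', hl's, hy_good⟩ := mem_nhdsLT_iff_exists_Ioo_subset.1 (hlim.eventually_mem hN)
  set a₀ := max (max a l) l'
  have ha₀ : a₀ < s := max_lt (max_lt has hlu.1) hl's
  have ha_le : a ≤ a₀ := (le_max_left _ _).trans (le_max_left _ _)
  have hf_sol : ∀ t ∈ Ioo a₀ u, (HasDerivAt f (v (f t)) t ∧ f t ∈ U) ∧ f t ∈ N := fun t ht =>
    have := hf_good ⟨((le_max_right a l).trans (le_max_left _ l')).trans_lt ht.1, ht.2⟩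
    ⟨⟨hf t this.2, this.1.2⟩, this.1.1⟩
  set ŷ := Function.update y s p
  have hŷ_sol : ∀ t ∈ Ioc a₀ s, (HasDerivWithinAt ŷ (v (ŷ t)) (Iic t) t ∧
      ContinuousWithinAt ŷ (Iic s) t) ∧ ŷ t ∈ N := by
    rintro t ⟨hta, hts⟩
    rcases hts.lt_or_eq with hts | rfl
    · have hŷt : ŷ =ᶠ[𝓝 t] y :=
        (eventually_ne_nhds hts.ne).mono fun u hu => Function.update_of_ne hu _ _
      have hyt : HasDerivAt y (v (y t)) t := hy t ⟨ha_le.trans_lt hta, hts⟩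
      rw [hŷt.eq_of_nhds]
      refine ⟨⟨(hyt.congr_of_eventuallyEq hŷt).hasDerivWithinAt,
        (hyt.congr_of_eventuallyEq hŷt).continuousAt.continuousWithinAt⟩, ?_⟩
      exact hy_good ⟨(le_max_right _ _).trans_lt hta, hts⟩
    · have hŷs : HasDerivWithinAt ŷ (v p) (Iic t) t :=
        hasDerivWithinAt_Iic_update_of_tendsto hv.continuousAt has hy hlim
      simp only [ŷ, Function.update_self] at hŷs ⊢
      exact ⟨⟨hŷs, hŷs.continuousWithinAt⟩, mem_of_mem_nhds hN⟩
  obtain ⟨a', ha', ha's⟩ := exists_between ha₀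
  -- uniqueness backwards in time from `s`, where `f` and `y` extended by `p` both pass through `p`
  have huniq : EqOn ŷ f (Icc a' s) := by
    refine ODE_solution_unique_of_mem_Icc_left (v := fun _ => v) (s := fun _ => N)
      (fun _ _ => hK) (fun t ht => ?_) (fun t ht => ?_) (fun t ht => ?_)
      (fun t ht => ?_) (fun t ht => ?_) (fun t ht => ?_) (by simp [ŷ, hfs])
    · exact (hŷ_sol t ⟨ha'.trans_le ht.1, ht.2⟩).1.2.mono Icc_subset_Iic_self
    · exact (hŷ_sol t ⟨ha'.trans ht.1, ht.2⟩).1.1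
    · exact (hŷ_sol t ⟨ha'.trans ht.1, ht.2⟩).2
    · exact (hf_sol t ⟨ha'.trans_le ht.1, ht.2.trans_lt hlu.2⟩).1.1.continuousAt.continuousWithinAt
    · exact (hf_sol t ⟨ha'.trans ht.1, ht.2.trans_lt hlu.2⟩).1.1.hasDerivWithinAt
    · exact (hf_sol t ⟨ha'.trans ht.1, ht.2.trans_lt hlu.2⟩).2
  refine ⟨a', ⟨ha_le.trans ha'.le, ha's⟩, u - s, by linarith [hlu.2], f,
    fun t ht => ?_, fun t ht => (hf_sol t ⟨ha'.trans ht.1, by linarith [ht.2]⟩).1⟩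
  rw [← huniq (Ioo_subset_Icc_self ht)]
  exact Function.update_of_ne ht.2.ne _ _

theorem forall_hasDerivAt_piecewise {v : E → E} {P : Set E} {I O : Set ℝ}
    [DecidablePred (· ∈ I)] {y f : ℝ → E}
    (hI : IsOpen I) (hO : IsOpen O) (heq : EqOn f y (I ∩ O))
    (hy : ∀ t ∈ I, HasDerivAt y (v (y t)) t ∧ y t ∈ P)
    (hf : ∀ t ∈ O, HasDerivAt f (v (f t)) t ∧ f t ∈ P) :
    ∀ t ∈ I ∪ O, HasDerivAt (I.piecewise y f) (v (I.piecewise y f t)) t ∧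
      I.piecewise y f t ∈ P := by
  have of_eventuallyEq : ∀ t g, I.piecewise y f =ᶠ[𝓝 t] g →
      HasDerivAt g (v (g t)) t ∧ g t ∈ P →
      HasDerivAt (I.piecewise y f) (v (I.piecewise y f t)) t ∧ I.piecewise y f t ∈ P :=
    fun t g hg ⟨hgd, hgP⟩ => by
      rw [hg.eq_of_nhds]; exact ⟨hgd.congr_of_eventuallyEq hg, hgP⟩
  rintro t (ht | ht)
  · exact of_eventuallyEq t y
      (Filter.eventually_of_mem (hI.mem_nhds ht) fun u hu => piecewise_eq_of_mem _ _ _ hu) (hy t ht)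
  · refine of_eventuallyEq t f (Filter.eventually_of_mem (hO.mem_nhds ht) fun u hu => ?_) (hf t ht)
    by_cases huI : u ∈ I
    · rw [piecewise_eq_of_mem _ _ _ huI, heq ⟨huI, hu⟩]
    · exact piecewise_eq_of_notMem _ _ _ huI

end ODE

section Pointwise

variable {b φ z φd : ℝ}

theorem one_add_mul_cos_ne_zero_of_relation
    (h : (1 + b * cos φ) * z * φd + 2 * cos φ - b * sin φ ^ 2 = 0) : 1 + b * cos φ ≠ 0 := by
  intro hW
  have : b ^ 2 + 1 = 0 := by
    linear_combination -b * h + (b * z * φd + 1 + b * cos φ) * hW - b ^ 2 * sin_sq_add_cos_sq φ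
  nlinarith [sq_nonneg b]

theorem cos_pos_of_one_add_mul_cos_neg (hW : 1 + b * cos φ < 0) (hb : b < 0) : 0 < cos φ := by
  nlinarith

theorem two_div_lt_of_relation {B Z : ℝ}
    (h : (1 + b * cos φ) * z * φd + 2 * cos φ - b * sin φ ^ 2 = 0)
    (hW : 1 + b * cos φ < 0) (hb : b < 0) (hz : 0 < z) (hB : b * (1 + b * cos φ) ≤ B)
    (hZ : z ≤ Z) : 2 / (B * Z) < φd := by
  have hbW : 0 < b * (1 + b * cos φ) := mul_pos_of_neg_of_neg hb hW
  have key : 2 < b * (1 + b * cos φ) * z * φd := by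
    have e : b * (1 + b * cos φ) * z * φd = (b * sin φ) ^ 2 - 2 * (b * cos φ) := by
      linear_combination b * h
    nlinarith [sq_nonneg (b * sin φ)]
  have hφd : 0 < φd := pos_of_mul_pos_right (two_pos.trans key) (by positivity)
  rw [div_lt_iff₀ (by nlinarith)]
  nlinarith [mul_le_mul hB hZ hz.le (hbW.le.trans hB)]

theorem pos_of_relation (h : (1 + b * cos φ) * z * φd + 2 * cos φ - b * sin φ ^ 2 = 0)
    (hW : 1 + b * cos φ < 0) (hb : b < 0) (hz : 0 < z) : 0 < φd :=
  (div_pos two_pos (mul_pos (mul_pos_of_neg_of_neg hb hW) hz)).trans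
    (two_div_lt_of_relation h hW hb hz le_rfl le_rfl)

end Pointwise

structure IsCurveSolution (b : ℝ) (θ x z θd : ℝ → ℝ) (I : Set ℝ) : Prop where
  hasDerivAt_x : ∀ s ∈ I, HasDerivAt x (cos (θ s)) s
  hasDerivAt_z : ∀ s ∈ I, HasDerivAt z (sin (θ s)) s
  hasDerivAt_θ : ∀ s ∈ I, HasDerivAt θ (θd s) s
  z_pos : ∀ s ∈ I, 0 < z s
  relation : ∀ s ∈ I,
    (1 + b * cos (θ s)) * z s * θd s + 2 * cos (θ s) - b * sin (θ s) ^ 2 = 0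

/-- `θ'` solved from the relation: the system as an autonomous ODE for the state `(θ, x, z)`. -/
noncomputable def curveField (b : ℝ) (q : ℝ × ℝ × ℝ) : ℝ × ℝ × ℝ :=
  ((b * sin q.1 ^ 2 - 2 * cos q.1) / ((1 + b * cos q.1) * q.2.2), cos q.1, sin q.1)

def curveDomain (b : ℝ) : Set (ℝ × ℝ × ℝ) := {q | 1 + b * cos q.1 ≠ 0 ∧ 0 < q.2.2}

theorem isOpen_curveDomain (b : ℝ) : IsOpen (curveDomain b) :=
  (isOpen_ne_fun (f := fun q : ℝ × ℝ × ℝ => 1 + b * cos q.1) (by fun_prop) continuous_const).inter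
    (isOpen_lt continuous_const (by fun_prop : Continuous fun q : ℝ × ℝ × ℝ => q.2.2))

theorem contDiffAt_curveField {b : ℝ} {q : ℝ × ℝ × ℝ} (hq : q ∈ curveDomain b) :
    ContDiffAt ℝ 1 (curveField b) q :=
  ((by fun_prop : ContDiffAt ℝ 1 (fun q : ℝ × ℝ × ℝ => b * sin q.1 ^ 2 - 2 * cos q.1) q).div
    (by fun_prop) (mul_ne_zero hq.1 hq.2.ne')).prodMk (by fun_prop)

theorem isCurveSolution_of_hasDerivAt {b : ℝ} {F : ℝ → ℝ × ℝ × ℝ} {J : Set ℝ}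
    (hF : ∀ s ∈ J, HasDerivAt F (curveField b (F s)) s ∧ F s ∈ curveDomain b) :
    IsCurveSolution b (fun t => (F t).1) (fun t => (F t).2.1) (fun t => (F t).2.2)
      (fun t => (curveField b (F t)).1) J where
  hasDerivAt_x s hs :=
    (hasFDerivAt_fst.comp_hasDerivAt s (hasFDerivAt_snd.comp_hasDerivAt s (hF s hs).1) :)
  hasDerivAt_z s hs :=
    (hasFDerivAt_snd.comp_hasDerivAt s (hasFDerivAt_snd.comp_hasDerivAt s (hF s hs).1) :)
  hasDerivAt_θ s hs := (hasFDerivAt_fst.comp_hasDerivAt s (hF s hs).1 :)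
  z_pos s hs := (hF s hs).2.2
  relation s hs := by
    obtain ⟨hW, hz⟩ := (hF s hs).2
    simp only [curveField]
    field_simp
    ring

namespace IsCurveSolution

variable {b : ℝ} {θ x z θd : ℝ → ℝ} {I : Set ℝ}

theorem hasDerivAt_state (h : IsCurveSolution b θ x z θd I) {s : ℝ} (hs : s ∈ I) :
    HasDerivAt (fun t => (θ t, x t, z t)) (curveField b (θ s, x s, z s)) s ∧
      (θ s, x s, z s) ∈ curveDomain b := by
  have hW := one_add_mul_cos_ne_zero_of_relation (h.relation s hs)
  have hz := h.z_pos s hs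
  have hfield : curveField b (θ s, x s, z s) = (θd s, cos (θ s), sin (θ s)) := by
    simp only [curveField, Prod.mk.injEq, and_true]
    rw [div_eq_iff (mul_ne_zero hW hz.ne')]
    linear_combination -h.relation s hs
  rw [hfield]
  exact ⟨(h.hasDerivAt_θ s hs).prodMk ((h.hasDerivAt_x s hs).prodMk (h.hasDerivAt_z s hs)), hW, hz⟩

theorem one_add_mul_cos_neg (h : IsCurveSolution b θ x z θd I) (hI : IsPreconnected I)
    (hI0 : 0 ∈ I) (hθ0 : θ 0 = 0) (hb : b < -1) : ∀ s ∈ I, 1 + b * cos (θ s) < 0 :=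
  hI.neg_of_ne_zero (by have := HasDerivAt.continuousOn h.hasDerivAt_θ; fun_prop) hI0
    (by simpa [hθ0] using by linarith)
    fun s hs => one_add_mul_cos_ne_zero_of_relation (h.relation s hs)

theorem abs_lt_pi_div_two (h : IsCurveSolution b θ x z θd I) (hI : IsPreconnected I)
    (hI0 : 0 ∈ I) (hθ0 : θ 0 = 0) (hcos : ∀ s ∈ I, 0 < cos (θ s)) : ∀ s ∈ I, |θ s| < π / 2 := by
  have := hI.neg_of_ne_zero (f := fun s => |θ s| - π / 2)
    (by have := HasDerivAt.continuousOn h.hasDerivAt_θ; fun_prop) hI0 (by simp [hθ0, pi_pos])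
    fun s hs hθs => (hcos s hs).ne' <| by rw [← cos_abs, sub_eq_zero.1 hθs, cos_pi_div_two]
  exact fun s hs => sub_neg.1 (this s hs)

theorem monotoneOn_z (h : IsCurveSolution b θ x z θd I) (hI : Convex ℝ I) (hI0 : 0 ∈ I)
    (hθ0 : θ 0 = 0) (hθ : MonotoneOn θ I) (hθπ : ∀ s ∈ I, θ s < π / 2) :
    MonotoneOn z (I ∩ Ici 0) :=
  monotoneOn_of_forall_hasDerivAt_nonneg (hI.inter (convex_Ici 0))
    (fun s hs => h.hasDerivAt_z s hs.1) fun s hs =>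
      sin_nonneg_of_nonneg_of_le_pi (hθ0 ▸ hθ hI0 hs.1 hs.2)
        (by linarith [hθπ s hs.1, pi_pos])

theorem bddAbove (h : IsCurveSolution b θ x z θd I) (hI : Convex ℝ I) (hI0 : 0 ∈ I)
    (hθ0 : θ 0 = 0) (hb : b < -1) (hW : ∀ s ∈ I, 1 + b * cos (θ s) < 0)
    (hθπ : ∀ s ∈ I, θ s < π / 2) : BddAbove I := by
  set c := 2 / (b * (1 + b))
  have hc : 0 < c := div_pos two_pos (mul_pos_of_neg_of_neg (by linarith) (by linarith))
  have hz0 := h.z_pos 0 hI0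
  have hD : Convex ℝ (I ∩ Ici 0) := hI.inter (convex_Ici 0)
  have hz_le : ∀ s ∈ I ∩ Ici 0, z s ≤ z 0 + s := fun s hs => by
    simpa using le_add_sub_of_forall_hasDerivAt_le_one hI h.hasDerivAt_z
      (fun t _ => sin_le_one _) hI0 hs.1 hs.2
  have hθd : ∀ s ∈ I ∩ Ici 0, c / (z 0 + s) ≤ θd s := fun s hs => by
    rw [div_div]
    exact (two_div_lt_of_relation (h.relation s hs.1) (hW s hs.1) (by linarith) (h.z_pos s hs.1)
      (by nlinarith [mul_le_mul_of_nonneg_left (cos_le_one (θ s)) (sq_nonneg b)]) (hz_le s hs)).le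
  refine ⟨exp (log (z 0) + π / 2 / c), fun s hs => ?_⟩
  rcases lt_or_ge s 0 with hs0 | hs0
  · linarith [exp_pos (log (z 0) + π / 2 / c)]
  have hlog := mul_log_sub_le_sub_of_div_le_hasDerivAt hD
    (fun t ht => by linarith [ht.2.out]) (fun t ht => h.hasDerivAt_θ t ht.1) hθd
    ⟨hI0, self_mem_Ici⟩ ⟨hs, hs0⟩ hs0
  rw [add_zero, hθ0, sub_zero] at hlog
  have : log (z 0 + s) ≤ log (z 0) + π / 2 / c := by
    rw [← sub_le_iff_le_add', le_div_iff₀ hc, mul_comm]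
    linarith [hθπ s hs]
  linarith [(log_le_iff_le_exp (by linarith)).1 this]

theorem exists_tendsto_state (h : IsCurveSolution b θ x z θd I) (hI : Convex ℝ I) (hI0 : 0 ∈ I)
    {sbar : ℝ} (hsbar : 0 < sbar) (hsub : Ioo 0 sbar ⊆ I) (hθ : MonotoneOn θ I)
    (hθπ : ∀ s ∈ I, θ s < π / 2) (hcos : ∀ s ∈ I, 0 < cos (θ s))
    (hz : MonotoneOn z (I ∩ Ici 0)) :
    ∃ q : ℝ × ℝ × ℝ, Tendsto (fun t => (θ t, x t, z t)) (𝓝[<] sbar) (𝓝 q) ∧ 0 < q.2.2 := by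
  have hne : (Ioo 0 sbar).Nonempty := nonempty_Ioo.2 hsbar
  have hsub' : Ioo 0 sbar ⊆ I ∩ Ici 0 := fun t ht => ⟨hsub ht, ht.1.le⟩
  have hbdd : ∀ {f f' : ℝ → ℝ}, (∀ t ∈ I, HasDerivAt f (f' t) t) → (∀ t ∈ I, f' t ≤ 1) →
      BddAbove (f '' Ioo 0 sbar) := by
    refine fun {f} _ hf hf' => ⟨f 0 + sbar, forall_mem_image.2 fun t ht => ?_⟩
    linarith [ht.2, le_add_sub_of_forall_hasDerivAt_le_one hI hf hf' hI0 (hsub ht) ht.1.le]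
  have hθlim := (hθ.mono hsub).tendsto_nhdsWithin_Ioo_left hne
    ⟨_, forall_mem_image.2 fun t ht => (hθπ t (hsub ht)).le⟩
  have hxlim := ((monotoneOn_of_forall_hasDerivAt_nonneg hI h.hasDerivAt_x fun t ht =>
    (hcos t ht).le).mono hsub).tendsto_nhdsWithin_Ioo_left hne
    (hbdd h.hasDerivAt_x fun _ _ => cos_le_one _)
  have hzlim := (hz.mono hsub').tendsto_nhdsWithin_Ioo_left hne
    (hbdd h.hasDerivAt_z fun _ _ => sin_le_one _)
  refine ⟨_, hθlim.prodMk_nhds (hxlim.prodMk_nhds hzlim), (h.z_pos 0 hI0).trans_le ?_⟩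
  refine ge_of_tendsto hzlim ?_
  filter_upwards [Ioo_mem_nhdsLT hsbar] with t ht using hz ⟨hI0, self_mem_Ici⟩ (hsub' ht) ht.1.le

theorem exists_extension (h : IsCurveSolution b θ x z θd I) (hI : I.OrdConnected)
    (hIopen : IsOpen I) {a sbar : ℝ} {q : ℝ × ℝ × ℝ} (hIs : ∀ t ∈ I, t < sbar)
    (hsub : Ioo a sbar ⊆ I) (has : a < sbar)
    (hlim : Tendsto (fun t => (θ t, x t, z t)) (𝓝[<] sbar) (𝓝 q)) (hq : q ∈ curveDomain b) :
    ∃ (J : Set ℝ) (θ₂ x₂ z₂ θd₂ : ℝ → ℝ), J.OrdConnected ∧ IsOpen J ∧ I ⊆ J ∧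
      (∀ s ∈ I, θ₂ s = θ s ∧ x₂ s = x s ∧ z₂ s = z s) ∧
      IsCurveSolution b θ₂ x₂ z₂ θd₂ J ∧ sbar ∈ J := by
  classical
  obtain ⟨a', ha', ε, hε, f, hfy, hf⟩ := exists_eqOn_hasDerivAt_of_tendsto
    (contDiffAt_curveField hq) ((isOpen_curveDomain b).mem_nhds hq) has
    (fun t ht => (h.hasDerivAt_state (hsub ht)).1) hlim
  set F := I.piecewise (fun t => (θ t, x t, z t)) f
  have hF := forall_hasDerivAt_piecewise hIopen isOpen_Ioo
    (fun t ht => hfy ⟨ht.2.1, hIs t ht.1⟩) (fun t ht => h.hasDerivAt_state ht) hf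
  obtain ⟨t, ht⟩ : (Ioo a' sbar).Nonempty := nonempty_Ioo.2 ha'.2
  refine ⟨I ∪ Ioo a' (sbar + ε), fun t => (F t).1, fun t => (F t).2.1, fun t => (F t).2.2,
    fun t => (curveField b (F t)).1, ?_, hIopen.union isOpen_Ioo, subset_union_left,
    fun s hs => ?_, isCurveSolution_of_hasDerivAt hF, Or.inr ⟨ha'.2, by linarith⟩⟩
  · refine isPreconnected_iff_ordConnected.1 <| hI.isPreconnected.union t
      (hsub ⟨ha'.1.trans_lt ht.1, ht.2⟩) ⟨ht.1, by linarith [ht.2]⟩ isPreconnected_Ioo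
  · simp only [F, piecewise_eq_of_mem _ _ _ hs, and_self]

theorem tendsto_deriv_atTop (h : IsCurveSolution b θ x z θd I) (hb : b < 0)
    (hW : ∀ s ∈ I, 1 + b * cos (θ s) < 0) {sbar Z : ℝ} (hI : ∀ᶠ t in 𝓝[<] sbar, t ∈ I)
    (hzZ : ∀ᶠ t in 𝓝[<] sbar, z t ≤ Z)
    (hW0 : Tendsto (fun t => 1 + b * cos (θ t)) (𝓝[<] sbar) (𝓝 0)) :
    Tendsto θd (𝓝[<] sbar) atTop := by
  obtain ⟨t, htI, htZ⟩ := (hI.and hzZ).exists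
  have hZ : 0 < Z := (h.z_pos t htI).trans_le htZ
  have hbW : Tendsto (fun t => b * (1 + b * cos (θ t))) (𝓝[<] sbar) (𝓝[>] 0) :=
    tendsto_nhdsWithin_iff.2 ⟨by simpa using hW0.const_mul b,
      hI.mono fun t ht => mul_pos_of_neg_of_neg hb (hW t ht)⟩
  refine tendsto_atTop_mono' _ ?_ ((tendsto_inv_nhdsGT_zero.comp hbW).const_mul_atTop
    (div_pos two_pos hZ))
  filter_upwards [hI, hzZ] with t ht hzt
  calc 2 / Z * (b * (1 + b * cos (θ t)))⁻¹ = 2 / (b * (1 + b * cos (θ t)) * Z) := by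
        rw [mul_comm _ Z, ← div_eq_mul_inv, div_div]
    _ ≤ θd t :=
        (two_div_lt_of_relation (h.relation t ht) (hW t ht) hb (h.z_pos t ht) le_rfl hzt).le

end IsCurveSolution

theorem stmt19_general (b : ℝ) (θ x z θd : ℝ → ℝ) (I : Set ℝ)
    (hI : I.OrdConnected) (hIopen : IsOpen I) (hI0 : (0 : ℝ) ∈ I)
    (hx : ∀ s ∈ I, HasDerivAt x (Real.cos (θ s)) s)
    (hz : ∀ s ∈ I, HasDerivAt z (Real.sin (θ s)) s)
    (hθ : ∀ s ∈ I, HasDerivAt θ (θd s) s)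
    (hzpos : ∀ s ∈ I, 0 < z s)
    (hW : ∀ s ∈ I, (1 + b * Real.cos (θ s)) * z s * θd s
      + 2 * Real.cos (θ s) - b * Real.sin (θ s) ^ 2 = 0)
    (hθ0 : θ 0 = 0) (hb : b < -1)
    (hmax : ∀ (J : Set ℝ) (θ₂ x₂ z₂ θd₂ : ℝ → ℝ),
      J.OrdConnected → IsOpen J → I ⊆ J →
      (∀ s ∈ I, θ₂ s = θ s ∧ x₂ s = x s ∧ z₂ s = z s) →
      (∀ s ∈ J, HasDerivAt x₂ (Real.cos (θ₂ s)) s ∧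
        HasDerivAt z₂ (Real.sin (θ₂ s)) s ∧ HasDerivAt θ₂ (θd₂ s) s ∧
        0 < z₂ s ∧ (1 + b * Real.cos (θ₂ s)) * z₂ s * θd₂ s
          + 2 * Real.cos (θ₂ s) - b * Real.sin (θ₂ s) ^ 2 = 0) →
      J ⊆ I) :
    StrictMonoOn θ I ∧
    (∀ s ∈ I, -(π / 2) < θ s ∧ θ s < π / 2) ∧
    MonotoneOn z (I ∩ Ici 0) ∧
    ∃ sbar : ℝ, 0 < sbar ∧ IsLUB I sbar ∧
      Tendsto θd (𝓝[<] sbar) atTop ∧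
      Tendsto (fun s => 1 + b * Real.cos (θ s)) (𝓝[<] sbar) (𝓝 0) := by
  have h : IsCurveSolution b θ x z θd I := ⟨hx, hz, hθ, hzpos, hW⟩
  have hb0 : b < 0 := by linarith
  have hWneg := h.one_add_mul_cos_neg hI.isPreconnected hI0 hθ0 hb
  have hcos s (hs : s ∈ I) := cos_pos_of_one_add_mul_cos_neg (hWneg s hs) hb0
  have hθπ s (hs : s ∈ I) := abs_lt.1 (h.abs_lt_pi_div_two hI.isPreconnected hI0 hθ0 hcos s hs)
  have hθmono : StrictMonoOn θ I := strictMonoOn_of_forall_hasDerivAt_pos hI.convex hθ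
    fun s hs => pos_of_relation (hW s hs) (hWneg s hs) hb0 (hzpos s hs)
  have hzmono := h.monotoneOn_z hI.convex hI0 hθ0 hθmono.monotoneOn fun s hs => (hθπ s hs).2
  obtain ⟨sbar, hsbar, hlub, hsbarI, hsub⟩ := exists_isLUB_of_isOpen hI hIopen hI0
    (h.bddAbove hI.convex hI0 hθ0 hb hWneg fun s hs => (hθπ s hs).2)
  have hIoo : Ioo 0 sbar ⊆ I := Ioo_subset_Ico_self.trans hsub
  obtain ⟨q, hq, hq₂⟩ := h.exists_tendsto_state hI.convex hI0 hsbar hIoo hθmono.monotoneOn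
    (fun s hs => (hθπ s hs).2) hcos hzmono
  have hq₁ : 1 + b * cos q.1 = 0 := by
    by_contra hq₁
    obtain ⟨J, θ₂, x₂, z₂, θd₂, hJ, hJopen, hIJ, hagree, h₂, hsbarJ⟩ :=
      h.exists_extension hI hIopen
        (fun t ht => (hlub.1 ht).lt_of_ne (ne_of_mem_of_not_mem ht hsbarI)) hIoo hsbar hq
        ⟨hq₁, hq₂⟩
    exact hsbarI <| hmax J θ₂ x₂ z₂ θd₂ hJ hJopen hIJ hagree (fun s hs => ⟨h₂.hasDerivAt_x s hs,
      h₂.hasDerivAt_z s hs, h₂.hasDerivAt_θ s hs, h₂.z_pos s hs, h₂.relation s hs⟩) hsbarJ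
  have hW0 : Tendsto (fun s => 1 + b * cos (θ s)) (𝓝[<] sbar) (𝓝 0) :=
    hq₁ ▸ ((continuous_const.add (continuous_const.mul continuous_cos)).tendsto q.1).comp
      hq.fst_nhds
  refine ⟨hθmono, hθπ, hzmono, sbar, hsbar, hlub, h.tendsto_deriv_atTop (Z := q.2.2 + 1) hb0 hWneg
    (mem_of_superset (Ioo_mem_nhdsLT hsbar) hIoo) ?_ hW0, hW0⟩
  exact (hq.snd_nhds.snd_nhds.eventually (gt_mem_nhds (lt_add_one q.2.2))).mono fun _ => le_of_lt

/-- Case `2H + bK = 0` with `b < -1`, `θ(0) = 0`: `θ` is strictly increasing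
with `-π/2 < θ < π/2`, `z` is increasing for `s > 0`, the maximal positive
existence time `s̄` is finite, and `θ' → +∞` while `1 + b cos θ → 0` as
`s → s̄`; consequently the surface cannot be extended to a complete one. -/
theorem stmt19 (b z₀ : ℝ) (θ x z θd : ℝ → ℝ) (I : Set ℝ)
    (hI : I.OrdConnected) (hIopen : IsOpen I) (hI0 : (0 : ℝ) ∈ I)
    (hx : ∀ s ∈ I, HasDerivAt x (Real.cos (θ s)) s)
    (hz : ∀ s ∈ I, HasDerivAt z (Real.sin (θ s)) s)
    (hθ : ∀ s ∈ I, HasDerivAt θ (θd s) s)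
    (hzpos : ∀ s ∈ I, 0 < z s)
    (hW : ∀ s ∈ I, (1 + b * Real.cos (θ s)) * z s * θd s
      + 2 * Real.cos (θ s) - b * Real.sin (θ s) ^ 2 = 0)
    (hθ0 : θ 0 = 0) (hz0 : z 0 = z₀) (hz₀ : 0 < z₀) (hb : b < -1)
    (hmax : ∀ (J : Set ℝ) (θ₂ x₂ z₂ θd₂ : ℝ → ℝ),
      J.OrdConnected → IsOpen J → I ⊆ J →
      (∀ s ∈ I, θ₂ s = θ s ∧ x₂ s = x s ∧ z₂ s = z s) →
      (∀ s ∈ J, HasDerivAt x₂ (Real.cos (θ₂ s)) s ∧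
        HasDerivAt z₂ (Real.sin (θ₂ s)) s ∧ HasDerivAt θ₂ (θd₂ s) s ∧
        0 < z₂ s ∧ (1 + b * Real.cos (θ₂ s)) * z₂ s * θd₂ s
          + 2 * Real.cos (θ₂ s) - b * Real.sin (θ₂ s) ^ 2 = 0) →
      J ⊆ I) :
    StrictMonoOn θ I ∧
    (∀ s ∈ I, -(π / 2) < θ s ∧ θ s < π / 2) ∧
    MonotoneOn z (I ∩ Ici 0) ∧
    ∃ sbar : ℝ, 0 < sbar ∧ IsLUB I sbar ∧
      Tendsto θd (𝓝[<] sbar) atTop ∧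
      Tendsto (fun s => 1 + b * Real.cos (θ s)) (𝓝[<] sbar) (𝓝 0) :=
  stmt19_general b θ x z θd I hI hIopen hI0 hx hz hθ hzpos hW hθ0 hb hmax
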